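/- arXiv:math/0410494 — 2 statements merged into one kernel-verified Lean document; each statement's English description precedes it below -/
import Mathlib

section
/- The charge conjugation form A on the spin representation Δ = Λ*(ℂ^m) of Spin(2m), defined by A(η,θ) = ⟨A(η̄), θ⟩ where A = Γ₁Γ₂⋯Γ_m, satisfies A(η,θ) = (-1)^{m(m-1)/2} A(θ,η); in particular A is symmetric for m ≡ 0,1 (mod 4) and skew-symmetric for m ≡ 2,3 (mod 4). -/
/-- The product `Γ₁ ⋯ Γ_m` of the first `m` gamma matrices. -/
noncomputable def AOp {Δ : Type} [AddCommGroup Δ] [Module ℂ Δ] (m : ℕ)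
    (Γ : Fin (2 * m) → Module.End ℂ Δ) : Module.End ℂ Δ :=
  (List.ofFn fun i : Fin m => Γ ⟨i.1, by have := i.2; omega⟩).prod

/-!
Writing `Aᵗ = Γ_m ⋯ Γ₁` for the reverse product, hermiticity of the `Γ_μ` gives
`⟨A η̄, θ⟩ = ⟨η̄, Aᵗ θ⟩`. The bilinear form `(η, ζ) ↦ ⟨η̄, ζ⟩` is symmetric since conjugation is an
antiunitary involution, and `Γ₁, …, Γ_m` are real, so `⟨η̄, Aᵗ θ⟩ = ⟨Aᵗ θ̄, η⟩`. Finally the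
`Γ_μ` anticommute pairwise, so reversing the `m` factors of `A` costs the sign `(-1)^(m choose 2)`.
-/

section Anticommute

variable {M : Type*} [Monoid M] [HasDistribNeg M]

theorem List.prod_mul_eq_neg_one_pow_mul_of_forall_anticommute {a : M} :
    ∀ {l : List M}, (∀ b ∈ l, b * a = -(a * b)) → l.prod * a = (-1) ^ l.length * (a * l.prod)
  | [], _ => by simp
  | b :: l, h => by
    rw [List.forall_mem_cons] at h
    rw [List.prod_cons, mul_assoc, prod_mul_eq_neg_one_pow_mul_of_forall_anticommute h.2,
      ← mul_assoc, ← ((Commute.neg_one_left b).pow_left _).eq, mul_assoc, ← mul_assoc b, h.1]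
    simp only [List.length_cons, pow_succ, neg_mul, mul_neg, mul_one, mul_assoc]

theorem List.prod_reverse_eq_neg_one_pow_mul_of_pairwise_anticommute :
    ∀ {l : List M}, l.Pairwise (fun a b => a * b = -(b * a)) →
      l.reverse.prod = (-1) ^ l.length.choose 2 * l.prod
  | [], _ => by simp
  | a :: l, h => by
    rw [List.pairwise_cons] at h
    have hmove : l.prod * a = (-1) ^ l.length * (a * l.prod) :=
      prod_mul_eq_neg_one_pow_mul_of_forall_anticommute fun b hb => by
        rw [h.1 b hb, neg_neg]
    rw [List.reverse_cons, List.prod_append, List.prod_singleton,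
      prod_reverse_eq_neg_one_pow_mul_of_pairwise_anticommute h.2, mul_assoc, hmove,
      ← mul_assoc, ← pow_add, List.length_cons, Nat.choose_succ_succ, Nat.choose_one_right,
      add_comm l.length, List.prod_cons]

end Anticommute

theorem Nat.even_choose_two_iff (m : ℕ) : Even (m.choose 2) ↔ m % 4 = 0 ∨ m % 4 = 1 := by
  rw [Nat.even_iff, Nat.choose_two_right, ← Nat.mod_mul_right_div_self, Nat.mul_mod]
  rcases Nat.eq_zero_or_pos m with rfl | hm
  · simp
  rw [show (m - 1) % 4 = (m % 4 + 3) % 4 by omega]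
  have h4 : m % 4 < 4 := Nat.mod_lt _ (by norm_num)
  interval_cases m % 4 <;> simp

section ListProdEnd

variable {R M : Type*} [Semiring R] [AddCommMonoid M] [Module R M]

theorem Module.End.list_prod_apply_left_eq_reverse {N : Type*} (B : M → M → N) :
    ∀ {l : List (Module.End R M)}, (∀ a ∈ l, ∀ x y, B (a x) y = B x (a y)) →
      ∀ x y, B (l.prod x) y = B x (l.reverse.prod y)
  | [], _, _, _ => by simp
  | a :: l, h, x, y => by
    rw [List.forall_mem_cons] at h
    rw [List.prod_cons, Module.End.mul_apply, h.1, list_prod_apply_left_eq_reverse B h.2,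
      List.reverse_cons, List.prod_append, List.prod_singleton, Module.End.mul_apply]

theorem Module.End.commute_list_prod {c : M → M} :
    ∀ {l : List (Module.End R M)}, (∀ a ∈ l, Function.Commute c a) → Function.Commute c ⇑l.prod
  | [], _ => fun _ => rfl
  | a :: l, h => by
    rw [List.forall_mem_cons] at h
    rw [List.prod_cons, Module.End.coe_mul]
    exact h.1.comp_right (commute_list_prod h.2)

end ListProdEnd

theorem Module.End.neg_one_pow_mul_apply {R M : Type*} [CommRing R] [AddCommGroup M]
    [Module R M] (k : ℕ) (f : Module.End R M) (x : M) : ((-1) ^ k * f) x = (-1 : R) ^ k • f x := by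
  rw [Module.End.mul_apply, ← map_one (algebraMap R (Module.End R M)), ← map_neg, ← map_pow,
    Module.algebraMap_end_apply]

section ChargeConjugation

variable {Δ : Type*} [AddCommGroup Δ] [Module ℂ Δ] {inn : Δ →ₗ⋆[ℂ] Δ →ₗ[ℂ] ℂ}
  {conj : Δ →ₗ⋆[ℂ] Δ}

theorem inn_conj_left_symm (hinn_conj_symm : ∀ η θ : Δ, inn η θ = starRingEnd ℂ (inn θ η))
    (hconj_invol : ∀ η : Δ, conj (conj η) = η)
    (hconj_inn : ∀ η θ : Δ, inn (conj η) (conj θ) = starRingEnd ℂ (inn η θ)) (η ζ : Δ) :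
    inn (conj η) ζ = inn (conj ζ) η := by
  rw [hinn_conj_symm, ← hconj_inn, hconj_invol]

theorem inn_list_prod_conj_swap (hinn_conj_symm : ∀ η θ : Δ, inn η θ = starRingEnd ℂ (inn θ η))
    (hconj_invol : ∀ η : Δ, conj (conj η) = η)
    (hconj_inn : ∀ η θ : Δ, inn (conj η) (conj θ) = starRingEnd ℂ (inn η θ))
    {L : List (Module.End ℂ Δ)} (hherm : ∀ a ∈ L, ∀ x y, inn (a x) y = inn x (a y))
    (hreal : ∀ a ∈ L, Function.Commute conj a) (hanti : L.Pairwise fun a b => a * b = -(b * a))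
    (η θ : Δ) :
    inn (L.prod (conj η)) θ = (-1) ^ L.length.choose 2 * inn (L.prod (conj θ)) η :=
  calc inn (L.prod (conj η)) θ = inn (conj η) (L.reverse.prod θ) :=
        Module.End.list_prod_apply_left_eq_reverse (fun x y => inn x y) hherm _ _
    _ = inn (L.reverse.prod (conj θ)) η := by
        rw [inn_conj_left_symm hinn_conj_symm hconj_invol hconj_inn,
          Module.End.commute_list_prod (fun a ha => hreal a (List.mem_reverse.1 ha))]
    _ = (-1) ^ L.length.choose 2 * inn (L.prod (conj θ)) η := by
        rw [List.prod_reverse_eq_neg_one_pow_mul_of_pairwise_anticommute hanti,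
          Module.End.neg_one_pow_mul_apply, map_smulₛₗ, LinearMap.smul_apply, smul_eq_mul,
          map_pow, map_neg, map_one]

end ChargeConjugation

theorem spin_charge_conjugation_A_symmetry_general
    (m : ℕ)
    -- the spin representation Δ = Λ*(U ⊗ ℂ) of Spin(2m)
    (Δ : Type) [AddCommGroup Δ] [Module ℂ Δ]
    -- the Dirac (hermitian) inner product ⟨·,·⟩ on Δ
    (inn : Δ →ₗ⋆[ℂ] Δ →ₗ[ℂ] ℂ)
    (hinn_conj_symm : ∀ η θ : Δ, inn η θ = (starRingEnd ℂ) (inn θ η))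
    -- the standard complex conjugation of Λ*(V ⊗ ℂ) restricted to Δ
    (conj : Δ →ₗ⋆[ℂ] Δ)
    (hconj_invol : ∀ η : Δ, conj (conj η) = η)
    (hconj_inn : ∀ η θ : Δ, inn (conj η) (conj θ) = (starRingEnd ℂ) (inn η θ))
    -- the gamma matrices Γ_μ, μ = 1, …, 2m
    (Γ : Fin (2 * m) → Module.End ℂ Δ)
    -- Clifford algebra relations Γ_μ Γ_ν + Γ_ν Γ_μ = 2 δ_{μν}
    (hcliff : ∀ μ ν : Fin (2 * m),
      Γ μ * Γ ν + Γ ν * Γ μ = if μ = ν then (2 : ℂ) • (1 : Module.End ℂ Δ) else 0)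
    -- the gamma matrices are hermitian with respect to ⟨·,·⟩
    (hherm : ∀ (μ : Fin (2 * m)) (η θ : Δ), inn (Γ μ η) θ = inn η (Γ μ θ))
    -- Γ_μ for μ ≤ m is a real operator, while Γ_{m+j} = -i e_j∧ + i e_j⌟ is
    -- purely imaginary: conjugation (anti)commutes accordingly
    (hconjΓ : ∀ (μ : Fin (2 * m)) (η : Δ),
      conj (Γ μ η) = (if (μ : ℕ) < m then (1 : ℂ) else -1) • Γ μ (conj η)) :
    -- the symmetry property of A(η,θ) = ⟨A(η̄), θ⟩, A = Γ₁⋯Γ_m :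
    (∀ η θ : Δ,
      inn (AOp m Γ (conj η)) θ
        = (-1 : ℂ) ^ (m * (m - 1) / 2) * inn (AOp m Γ (conj θ)) η)
    -- in particular, A is symmetric for m ≡ 0, 1 (mod 4)
    ∧ ((m % 4 = 0 ∨ m % 4 = 1) →
        ∀ η θ : Δ, inn (AOp m Γ (conj η)) θ = inn (AOp m Γ (conj θ)) η)
    -- and skew-symmetric for m ≡ 2, 3 (mod 4)
    ∧ ((m % 4 = 2 ∨ m % 4 = 3) →
        ∀ η θ : Δ, inn (AOp m Γ (conj η)) θ = - inn (AOp m Γ (conj θ)) η) := by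
  have hle : m ≤ 2 * m := by omega
  set L := List.ofFn (Γ ∘ Fin.castLE hle)
  have hL_herm : ∀ a ∈ L, ∀ x y, inn (a x) y = inn x (a y) :=
    List.forall_mem_ofFn_iff.2 fun i => hherm _
  have hL_real : ∀ a ∈ L, Function.Commute conj a :=
    List.forall_mem_ofFn_iff.2 fun i x => by simp [hconjΓ, i.2]
  have hL_anti : L.Pairwise fun a b => a * b = -(b * a) :=
    List.pairwise_ofFn.2 fun i j hij => by
      have hc := hcliff (Fin.castLE hle i) (Fin.castLE hle j)
      rw [if_neg ((Fin.castLE_injective _).ne hij.ne)] at hc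
      exact eq_neg_of_add_eq_zero_left hc
  have key : ∀ η θ : Δ, inn (AOp m Γ (conj η)) θ
      = (-1 : ℂ) ^ (m * (m - 1) / 2) * inn (AOp m Γ (conj θ)) η := fun η θ => by
    have := inn_list_prod_conj_swap hinn_conj_symm hconj_invol hconj_inn hL_herm hL_real hL_anti η θ
    rwa [List.length_ofFn, Nat.choose_two_right] at this
  refine ⟨key, fun h η θ => ?_, fun h η θ => ?_⟩
  · rw [key, ← Nat.choose_two_right, ((Nat.even_choose_two_iff m).2 h).neg_one_pow, one_mul]
  · have hodd : Odd (m.choose 2) :=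
      Nat.not_even_iff_odd.1 fun he => by have := (Nat.even_choose_two_iff m).1 he; omega
    rw [key, ← Nat.choose_two_right, hodd.neg_one_pow, neg_one_mul]

theorem spin_charge_conjugation_A_symmetry
    (m : ℕ) (hm : 0 < m)
    -- the spin representation Δ = Λ*(U ⊗ ℂ) of Spin(2m)
    (Δ : Type) [AddCommGroup Δ] [Module ℂ Δ]
    -- the Dirac (hermitian) inner product ⟨·,·⟩ on Δ
    (inn : Δ →ₗ⋆[ℂ] Δ →ₗ[ℂ] ℂ)
    (hinn_conj_symm : ∀ η θ : Δ, inn η θ = (starRingEnd ℂ) (inn θ η))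
    -- the standard complex conjugation of Λ*(V ⊗ ℂ) restricted to Δ
    (conj : Δ →ₗ⋆[ℂ] Δ)
    (hconj_invol : ∀ η : Δ, conj (conj η) = η)
    (hconj_inn : ∀ η θ : Δ, inn (conj η) (conj θ) = (starRingEnd ℂ) (inn η θ))
    -- the gamma matrices Γ_μ, μ = 1, …, 2m
    (Γ : Fin (2 * m) → Module.End ℂ Δ)
    -- Clifford algebra relations Γ_μ Γ_ν + Γ_ν Γ_μ = 2 δ_{μν}
    (hcliff : ∀ μ ν : Fin (2 * m),
      Γ μ * Γ ν + Γ ν * Γ μ = if μ = ν then (2 : ℂ) • (1 : Module.End ℂ Δ) else 0)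
    -- the gamma matrices are hermitian with respect to ⟨·,·⟩
    (hherm : ∀ (μ : Fin (2 * m)) (η θ : Δ), inn (Γ μ η) θ = inn η (Γ μ θ))
    -- Γ_μ for μ ≤ m is a real operator, while Γ_{m+j} = -i e_j∧ + i e_j⌟ is
    -- purely imaginary: conjugation (anti)commutes accordingly
    (hconjΓ : ∀ (μ : Fin (2 * m)) (η : Δ),
      conj (Γ μ η) = (if (μ : ℕ) < m then (1 : ℂ) else -1) • Γ μ (conj η)) :
    -- the symmetry property of A(η,θ) = ⟨A(η̄), θ⟩, A = Γ₁⋯Γ_m :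
    (∀ η θ : Δ,
      inn (AOp m Γ (conj η)) θ
        = (-1 : ℂ) ^ (m * (m - 1) / 2) * inn (AOp m Γ (conj θ)) η)
    -- in particular, A is symmetric for m ≡ 0, 1 (mod 4)
    ∧ ((m % 4 = 0 ∨ m % 4 = 1) →
        ∀ η θ : Δ, inn (AOp m Γ (conj η)) θ = inn (AOp m Γ (conj θ)) η)
    -- and skew-symmetric for m ≡ 2, 3 (mod 4)
    ∧ ((m % 4 = 2 ∨ m % 4 = 3) →
        ∀ η θ : Δ, inn (AOp m Γ (conj η)) θ = - inn (AOp m Γ (conj θ)) η) :=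
  spin_charge_conjugation_A_symmetry_general m Δ inn hinn_conj_symm conj hconj_invol hconj_inn Γ
    hcliff hherm hconjΓ
end

section
/- Let p be a positive integer and suppose CΓ^{(p)}: Δ⊗Δ → Λ^p is skew-symmetric (i.e. p(p-1)/2 + (p+1)s_C + p s_Γ is odd). Then the algebraic operator D_{(p)}: Λ^q(M)⊗C^ℓ(M) → Λ^{q-p}(M)⊗C^{ℓ+2}(M) contracting p form indices with (CΓ^{μ₁…μ_p})_{A₁A₂} and wedging the two new spinor indices satisfies D_{(p)}² = 0 provided p is odd. -/
/-!  STATEMENT 9.  If `CΓ^{(p)} : Δ⊗Δ → Λ^p` is skew-symmetric (which holds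
when `p(p-1)/2 + (p+1)s_C + p s_Γ` is odd), then the algebraic operator
`D_{(p)} : Λ^q(M) ⊗ 𝒞^ℓ(M) → Λ^{q-p}(M) ⊗ 𝒞^{ℓ+2}(M)`, contracting `p` form
indices with `(CΓ^{μ₁…μ_p})_{A₁A₂}` and wedging the two new spinor indices,
satisfies `D_{(p)}² = 0` provided `p` is odd.

Sections of `Λ^q(M) ⊗ 𝒞^ℓ(M)` are modelled by their components: functions
`(Fin q → Fin n) → (Fin ℓ → Fin N) → S` alternating in both blocks of indices,
with values in a module `S` (the functions on `M`). -/

/-- The algebraic spin operator `D_{(p)}` in components: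
`(D_{(p)}φ) = (-1)^{p(p-1)/2+ℓ} Alt[(CΓ^{μ₁…μ_p})_{A₁A₂}
   φ_{μ₁…μ_p ν₁…ν_{q} A₃…A_{ℓ+2}}]`. -/
noncomputable def Dpop {n N p : ℕ} {S : Type} [AddCommGroup S] [Module ℂ S]
    (Gc : (Fin p → Fin n) → Fin N → Fin N → ℂ) {q ℓ : ℕ}
    (φ : (Fin (p + q) → Fin n) → (Fin ℓ → Fin N) → S) :
    (Fin q → Fin n) → (Fin (ℓ + 2) → Fin N) → S := fun ν A =>
  ((-1 : ℂ) ^ (p * (p - 1) / 2 + ℓ)) •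
    ∑ σ : Equiv.Perm (Fin (ℓ + 2)), ∑ μb : Fin p → Fin n,
      (((Equiv.Perm.sign σ : ℤ) : ℂ) * Gc μb (A (σ 0)) (A (σ 1))) •
        φ (Fin.append μb ν) (fun i : Fin ℓ => A (σ i.succ.succ))

/-- block swap of two `p`-blocks followed by a fixed `q`-block. -/
noncomputable def blockSwap (p q : ℕ) : Equiv.Perm (Fin (p + (p + q))) :=
  (((Equiv.sumAssoc (Fin p) (Fin p) (Fin q)).trans
    ((Equiv.sumCongr (Equiv.refl (Fin p)) finSumFinEquiv).trans finSumFinEquiv)).permCongr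
    (Equiv.sumCongr (Equiv.sumComm (Fin p) (Fin p)) (Equiv.refl (Fin q))))

lemma sign_sumComm (p : ℕ) :
    Equiv.Perm.sign (Equiv.sumComm (Fin p) (Fin p)) = (-1) ^ p := by
  have h := Equiv.Perm.sign_eq_sign_of_equiv
    (Equiv.prodCongrLeft (fun _ : Fin p => Equiv.swap false true))
    (Equiv.sumComm (Fin p) (Fin p)) (Equiv.boolProdEquivSum (Fin p))
    (by rintro ⟨(_|_), a⟩ <;> simp [Equiv.prodCongrLeft, Equiv.swap_apply_def])
  rw [← h, Equiv.Perm.sign_prodCongrLeft]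
  simp [Equiv.Perm.sign_swap]

lemma sign_blockSwap (p q : ℕ) :
    Equiv.Perm.sign (blockSwap p q) = (-1) ^ p := by
  rw [blockSwap, Equiv.Perm.sign_permCongr, Equiv.Perm.sign_sumCongr, sign_sumComm]
  simp

lemma blockSwap_append {n p q : ℕ} (μ1 μ2 : Fin p → Fin n) (ν : Fin q → Fin n) :
    (Fin.append μ2 (Fin.append μ1 ν)) ∘ (blockSwap p q) = Fin.append μ1 (Fin.append μ2 ν) := by
  funext x
  obtain ⟨y, rfl⟩ := (((Equiv.sumAssoc (Fin p) (Fin p) (Fin q)).trans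
    ((Equiv.sumCongr (Equiv.refl (Fin p)) finSumFinEquiv).trans finSumFinEquiv))).surjective x
  rcases y with (i | i) | j <;>
    simp [blockSwap, Equiv.permCongr_apply, Fin.append_left, Fin.append_right]

lemma sum_neg_equiv_eq_zero {ι : Type*} [Fintype ι] {S : Type} [AddCommGroup S] [Module ℂ S]
    (e : ι ≃ ι) (F : ι → S) (h : ∀ x, F (e x) = - F x) : ∑ x, F x = 0 := by
  have h1 : ∑ x, F x = - ∑ x, F x := by
    conv_lhs => rw [← Equiv.sum_comp e F]
    rw [← Finset.sum_neg_distrib]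
    exact Finset.sum_congr rfl fun x _ => h x
  have h2 : (2 : ℂ) • ∑ x, F x = 0 := by
    rw [two_smul]; nth_rewrite 1 [h1]; exact neg_add_cancel _
  simpa using (smul_eq_zero.mp h2).resolve_left (by norm_num)

theorem algebraic_spin_operator_nilpotent
    (n N p q ℓ : ℕ) (hp : 0 < p)
    -- D_{(p)}² = 0 provided p is odd
    (hodd : Odd p)
    (S : Type) [AddCommGroup S] [Module ℂ S]
    -- the components of the p-form valued bispinor CΓ^{(p)}
    (Gc : (Fin p → Fin n) → Fin N → Fin N → ℂ)
    -- CΓ_{μ₁…μ_p} is antisymmetric in its form indices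
    (hGalt : ∀ (f : Fin p → Fin n) (σ : Equiv.Perm (Fin p)) (a b : Fin N),
      Gc (f ∘ σ) a b = ((Equiv.Perm.sign σ : ℤ) : ℂ) * Gc f a b)
    -- CΓ^{(p)} is skew-symmetric: CΓ^{(p)}(η,θ) = -CΓ^{(p)}(θ,η)
    (hGskew : ∀ (f : Fin p → Fin n) (a b : Fin N), Gc f a b = - Gc f b a)
    -- a section of Λ^{p+(p+q)}(M) ⊗ 𝒞^ℓ(M), alternating in both index blocks
    (φ : (Fin (p + (p + q)) → Fin n) → (Fin ℓ → Fin N) → S)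
    (hφ : ∀ (f : Fin (p + (p + q)) → Fin n) (A : Fin ℓ → Fin N)
        (σ : Equiv.Perm (Fin (p + (p + q)))) (τ : Equiv.Perm (Fin ℓ)),
      φ (f ∘ σ) (A ∘ τ)
        = (((Equiv.Perm.sign σ : ℤ) : ℂ) * ((Equiv.Perm.sign τ : ℤ) : ℂ)) • φ f A) :
    ∀ (ν : Fin q → Fin n) (A : Fin (ℓ + 4) → Fin N),
      Dpop Gc (Dpop Gc φ) ν A = 0 := by
  intro ν A
  classical
  -- the block-swap antisymmetry of φ
  have hswap : ∀ (μ1 μ2 : Fin p → Fin n) (B : Fin ℓ → Fin N),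
      φ (Fin.append μ1 (Fin.append μ2 ν)) B = - φ (Fin.append μ2 (Fin.append μ1 ν)) B := by
    intro μ1 μ2 B
    have h := hφ (Fin.append μ2 (Fin.append μ1 ν)) B (blockSwap p q) 1
    rw [blockSwap_append] at h
    simp only [Equiv.Perm.coe_one, Function.comp_id, map_one, Equiv.Perm.sign_one] at h
    rw [h, sign_blockSwap, Odd.neg_one_pow hodd]
    norm_num
  -- the "pair-exchange" permutation attached to τ
  set g : Equiv.Perm (Fin (ℓ + 2)) → Equiv.Perm (Fin (ℓ + 2 + 2)) := fun τ =>
    Equiv.swap 0 ((τ 0).succ.succ) * Equiv.swap 1 ((τ 1).succ.succ) with hg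
  -- some inequalities
  have h01 : (0 : Fin (ℓ + 2 + 2)) ≠ 1 := by simp [Fin.ext_iff]
  have h01' : (0 : Fin (ℓ + 2)) ≠ 1 := by simp [Fin.ext_iff]
  have ne_ss : ∀ (x y : Fin (ℓ + 2)), x ≠ y → x.succ.succ ≠ y.succ.succ :=
    fun x y h h' => h (Fin.succ_injective _ (Fin.succ_injective _ h'))
  have gτ0 : ∀ τ : Equiv.Perm (Fin (ℓ + 2)), (g τ) 0 = (τ 0).succ.succ := by
    intro τ
    rw [hg]
    simp only [Equiv.Perm.mul_apply]
    rw [Equiv.swap_apply_of_ne_of_ne h01 (Ne.symm (Fin.succ_ne_zero _)),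
      Equiv.swap_apply_left]
  have gτ1 : ∀ τ : Equiv.Perm (Fin (ℓ + 2)), (g τ) 1 = (τ 1).succ.succ := by
    intro τ
    rw [hg]
    simp only [Equiv.Perm.mul_apply]
    rw [Equiv.swap_apply_left,
      Equiv.swap_apply_of_ne_of_ne (Fin.succ_ne_zero _)
        (ne_ss _ _ (fun h => h01'.symm (τ.injective h)))]
  have gτa : ∀ τ : Equiv.Perm (Fin (ℓ + 2)), (g τ) ((τ 0).succ.succ) = 0 := by
    intro τ
    rw [hg]
    simp only [Equiv.Perm.mul_apply]
    rw [Equiv.swap_apply_of_ne_of_ne (Fin.succ_succ_ne_one _)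
        (ne_ss _ _ (fun h => h01' (τ.injective h))),
      Equiv.swap_apply_right]
  have gτb : ∀ τ : Equiv.Perm (Fin (ℓ + 2)), (g τ) ((τ 1).succ.succ) = 1 := by
    intro τ
    rw [hg]
    simp only [Equiv.Perm.mul_apply]
    rw [Equiv.swap_apply_right,
      Equiv.swap_apply_of_ne_of_ne (Ne.symm h01) (Ne.symm (Fin.succ_succ_ne_one _))]
  have gτfix : ∀ (τ : Equiv.Perm (Fin (ℓ + 2))) (i : Fin ℓ),
      (g τ) ((τ i.succ.succ).succ.succ) = (τ i.succ.succ).succ.succ := by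
    intro τ i
    rw [hg]
    simp only [Equiv.Perm.mul_apply]
    rw [Equiv.swap_apply_of_ne_of_ne (Fin.succ_succ_ne_one _)
        (ne_ss _ _ (fun h => Fin.succ_succ_ne_one i (τ.injective h))),
      Equiv.swap_apply_of_ne_of_ne (Fin.succ_ne_zero _)
        (ne_ss _ _ (fun h => Fin.succ_ne_zero i.succ (τ.injective h)))]
  have gτsign : ∀ τ : Equiv.Perm (Fin (ℓ + 2)), Equiv.Perm.sign (g τ) = 1 := by
    intro τ
    rw [hg]
    simp only [map_mul]
    rw [Equiv.Perm.sign_swap (Ne.symm (Fin.succ_ne_zero _)),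
      Equiv.Perm.sign_swap (Ne.symm (Fin.succ_succ_ne_one _))]
    norm_num
  simp only [Dpop, Finset.smul_sum, smul_smul]
  rw [show (∑ x : Equiv.Perm (Fin (ℓ + 2 + 2)),
      ∑ x_1 : Fin p → Fin n,
        ∑ x_2 : Equiv.Perm (Fin (ℓ + 2)),
          ∑ x_3 : Fin p → Fin n,
            ((-1 : ℂ) ^ (p * (p - 1) / 2 + (ℓ + 2)) *
                (((Equiv.Perm.sign x : ℤ) : ℂ) * Gc x_1 (A (x 0)) (A (x 1)) *
                  ((-1) ^ (p * (p - 1) / 2 + ℓ) *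
                    (((Equiv.Perm.sign x_2 : ℤ) : ℂ) *
                      Gc x_3 (A (x (x_2 0).succ.succ)) (A (x (x_2 1).succ.succ)))))) •
              φ (Fin.append x_3 (Fin.append x_1 ν)) fun i => A (x (x_2 i.succ.succ).succ.succ)) =
      ∑ x : Equiv.Perm (Fin (ℓ + 2 + 2)) × (Fin p → Fin n) × Equiv.Perm (Fin (ℓ + 2)) ×
          (Fin p → Fin n),
            ((-1 : ℂ) ^ (p * (p - 1) / 2 + (ℓ + 2)) *
                (((Equiv.Perm.sign x.1 : ℤ) : ℂ) * Gc x.2.1 (A (x.1 0)) (A (x.1 1)) *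
                  ((-1) ^ (p * (p - 1) / 2 + ℓ) *
                    (((Equiv.Perm.sign x.2.2.1 : ℤ) : ℂ) *
                      Gc x.2.2.2 (A (x.1 (x.2.2.1 0).succ.succ)) (A (x.1 (x.2.2.1 1).succ.succ)))))) •
              φ (Fin.append x.2.2.2 (Fin.append x.2.1 ν))
                fun i => A (x.1 (x.2.2.1 i.succ.succ).succ.succ)
      from by simp only [Fintype.sum_prod_type]]
  rw [sum_neg_equiv_eq_zero
    (⟨fun x => (x.1 * g x.2.2.1, x.2.2.2, x.2.2.1, x.2.1),
      fun x => (x.1 * (g x.2.2.1)⁻¹, x.2.2.2, x.2.2.1, x.2.1),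
      by rintro ⟨σ, μ1, τ, μ2⟩; simp [mul_assoc],
      by rintro ⟨σ, μ1, τ, μ2⟩; simp [mul_assoc]⟩ : _ ≃ _)
    _ ?_]
  rintro ⟨σ, μ1, τ, μ2⟩
  simp only [Equiv.coe_fn_mk, Equiv.Perm.mul_apply, map_mul, gτsign τ, gτ0 τ, gτ1 τ, gτa τ,
    gτb τ, gτfix τ, mul_one, Equiv.Perm.coe_mul, Function.comp_apply]
  rw [hswap μ2 μ1 (fun i => A (σ ((τ i.succ.succ).succ.succ))), smul_neg, ← neg_smul, ← neg_smul]
  congr 1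
  push_cast
  ring
end
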